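/- Fix x ∈ 𝒳, a regularizer value R ≥ 0, ε > 0, and data ξ̂₁,…,ξ̂ₙ ∈ Ξ. If the image F(x,Ξ) ⊆ ℝ is an interval unbounded above, then (1/n)∑ᵢ F(x,ξ̂ᵢ) + εR equals the supremum of 𝔼_ℚ[ς] over all probability measures ℚ on F(x,Ξ) satisfying W₁(ℚ, F(x,·)_#𝔓̂ₙ) ≤ εR, where 𝔓̂ₙ = (1/n)∑ᵢ δ_{ξ̂ᵢ}. -/

import Mathlib

open MeasureTheory ENNReal

/-!
Under any coupling `π` of `Q` with the empirical law of the values `F(x, ξ̂ᵢ)`, the mean of `Q`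
exceeds the empirical mean by `∫ (s - t) dπ ≤ ∫ |s - t| dπ`, so taking the infimum over couplings
it exceeds it by at most `W₁ ≤ εR`. The bound is attained by shifting every sample value up by
`εR`: the shifted values stay in `F(x, Ξ)` because that set is an interval unbounded above, and
matching each value with its shift costs exactly `εR`.
-/

/-- Optimal transport cost between two measures (1-Wasserstein when the cost is a metric). -/
noncomputable def Wcost {E : Type*} [MeasurableSpace E] (c : E → E → ℝ)
    (μ ν : Measure E) : ℝ≥0∞ :=
  ⨅ (π : Measure (E × E)) (_ : π.map Prod.fst = μ) (_ : π.map Prod.snd = ν),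
    ∫⁻ z, ENNReal.ofReal (c z.1 z.2) ∂π

/-- The empirical measure of a finite sample. -/
noncomputable def empMeasure {E : Type*} [MeasurableSpace E] {n : ℕ}
    (ξ : Fin n → E) : Measure E :=
  ((n : ℝ≥0∞))⁻¹ • ∑ i, Measure.dirac (ξ i)

section empMeasure

variable {E F : Type*} [MeasurableSpace E] [MeasurableSpace F] {n : ℕ}

theorem isProbabilityMeasure_empMeasure (ξ : Fin n → E) (hn : 0 < n) :
    IsProbabilityMeasure (empMeasure ξ) := by
  constructor
  simp [empMeasure, ENNReal.inv_mul_cancel, hn.ne']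

theorem map_empMeasure (ξ : Fin n → E) {f : E → F} (hf : Measurable f) :
    (empMeasure ξ).map f = empMeasure (f ∘ ξ) := by
  simp [empMeasure, Measure.map_smul, Measure.map_finset_sum hf.aemeasurable,
    Measure.map_dirac' hf]

variable [MeasurableSingletonClass E]

theorem empMeasure_compl_eq_zero {ξ : Fin n → E} {s : Set E} (hs : ∀ i, ξ i ∈ s) :
    empMeasure ξ sᶜ = 0 := by
  simp [empMeasure, Measure.dirac_apply, hs]

theorem lintegral_empMeasure (ξ : Fin n → E) (f : E → ℝ≥0∞) :
    ∫⁻ e, f e ∂empMeasure ξ = (n : ℝ≥0∞)⁻¹ * ∑ i, f (ξ i) := by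
  simp [empMeasure, lintegral_finsetSum_measure, lintegral_dirac]

theorem integrable_empMeasure (ξ : Fin n → E) (f : E → ℝ) : Integrable f (empMeasure ξ) := by
  rcases Nat.eq_zero_or_pos n with rfl | hn
  · simp [empMeasure]
  · exact (integrable_finsetSum_measure.2 fun i _ ↦ integrable_dirac enorm_lt_top).smul_measure
      (by simpa using hn.ne')

theorem integral_empMeasure (ξ : Fin n → E) (f : E → ℝ) :
    ∫ e, f e ∂empMeasure ξ = (∑ i, f (ξ i)) / n := by
  simp [empMeasure, integral_finsetSum_measure fun i _ ↦ integrable_dirac enorm_lt_top,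
    integral_dirac, div_eq_inv_mul]

end empMeasure

theorem Wcost_le_lintegral {E : Type*} [MeasurableSpace E] (c : E → E → ℝ) {μ ν : Measure E}
    (π : Measure (E × E)) (h₁ : π.map Prod.fst = μ) (h₂ : π.map Prod.snd = ν) :
    Wcost c μ ν ≤ ∫⁻ z, ENNReal.ofReal (c z.1 z.2) ∂π :=
  iInf_le_of_le π <| iInf_le_of_le h₁ <| iInf_le _ h₂

theorem Wcost_empMeasure_le {E : Type*} [MeasurableSpace E] [MeasurableSingletonClass E] {n : ℕ}
    (c : E → E → ℝ) (y z : Fin n → E) :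
    Wcost c (empMeasure y) (empMeasure z) ≤
      (n : ℝ≥0∞)⁻¹ * ∑ i, ENNReal.ofReal (c (y i) (z i)) := by
  have h₁ := map_empMeasure (fun i ↦ (y i, z i)) measurable_fst
  have h₂ := map_empMeasure (fun i ↦ (y i, z i)) measurable_snd
  exact (Wcost_le_lintegral c _ h₁ h₂).trans_eq (lintegral_empMeasure _ _)

theorem integral_fst_le_integral_snd_add {π : Measure (ℝ × ℝ)}
    (h₂ : Integrable Prod.snd π) (hcost : ∫⁻ z, ENNReal.ofReal |z.1 - z.2| ∂π ≠ ∞) :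
    ∫ z, z.1 ∂π ≤ ∫ z, z.2 ∂π + (∫⁻ z, ENNReal.ofReal |z.1 - z.2| ∂π).toReal := by
  have hdiff : Integrable (fun z : ℝ × ℝ ↦ z.1 - z.2) π :=
    ⟨(measurable_fst.sub measurable_snd).aestronglyMeasurable, by
      simpa [HasFiniteIntegral, Real.enorm_eq_ofReal_abs] using hcost.lt_top⟩
  calc ∫ z, z.1 ∂π = ∫ z, z.1 - z.2 ∂π + ∫ z, z.2 ∂π := by
        rw [← integral_add hdiff h₂]; simp
    _ ≤ ∫ z, |z.1 - z.2| ∂π + ∫ z, z.2 ∂π :=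
        add_le_add_left (integral_mono hdiff hdiff.abs fun z ↦ le_abs_self _) _
    _ = _ := by
        have h := integral_norm_eq_lintegral_enorm hdiff.aestronglyMeasurable
        simp only [Real.norm_eq_abs, Real.enorm_eq_ofReal_abs] at h
        rw [h, add_comm]

theorem integral_le_integral_add_of_Wcost_le {Q ν : Measure ℝ} {c : ℝ}
    (hν : Integrable (fun s ↦ s) ν) (hc : 0 ≤ c)
    (hW : Wcost (fun a b ↦ |a - b|) Q ν ≤ ENNReal.ofReal c) :
    ∫ s, s ∂Q ≤ ∫ s, s ∂ν + c := by
  refine le_of_forall_pos_le_add fun δ hδ ↦ ?_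
  have hlt : Wcost (fun a b ↦ |a - b|) Q ν < ENNReal.ofReal (c + δ) :=
    hW.trans_lt (ENNReal.ofReal_lt_ofReal_iff'.2 ⟨by linarith, by linarith⟩)
  simp only [Wcost, iInf_lt_iff] at hlt
  obtain ⟨π, rfl, rfl, hπ⟩ := hlt
  have h₂ : Integrable Prod.snd π :=
    (integrable_map_measure aestronglyMeasurable_id measurable_snd.aemeasurable).1 hν
  rw [integral_map (f := fun s ↦ s) measurable_fst.aemeasurable aestronglyMeasurable_id,
    integral_map (f := fun s ↦ s) measurable_snd.aemeasurable aestronglyMeasurable_id, add_assoc]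
  refine (integral_fst_le_integral_snd_add h₂ (hπ.trans ofReal_lt_top).ne).trans ?_
  gcongr
  exact ENNReal.toReal_le_of_le_ofReal (by linarith) hπ.le

theorem Set.OrdConnected.mem_of_le_of_not_bddAbove {α : Type*} [LinearOrder α] {s : Set α}
    (hs : s.OrdConnected) (hub : ¬ BddAbove s) {a b : α} (ha : a ∈ s) (hab : a ≤ b) : b ∈ s := by
  obtain ⟨y, hy, hby⟩ := not_bddAbove_iff.1 hub b
  exact hs.out ha hy ⟨hab, hby.le⟩

/-- Regularized SAA equals a decision-dependent Wasserstein DRO problem: if the image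
`F(x,Ξ)` is an interval unbounded above, then
`(1/n)∑ᵢ F(x,ξ̂ᵢ) + εR = sup { 𝔼_Q[ς] : Q on F(x,Ξ), W₁(Q, F(x,·)_#𝔓̂ₙ) ≤ εR }`. -/
theorem regSAA_eq_decision_dependent_WDRO
    {E X : Type*} [MeasurableSpace E] {n : ℕ} (hn : 0 < n)
    (Ξ : Set E) (F : X → E → ℝ) (x : X) (R ε : ℝ) (hR : 0 ≤ R) (hε : 0 < ε)
    (ξ : Fin n → E) (hξ : ∀ i, ξ i ∈ Ξ)
    (hFmeas : Measurable (F x))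
    (hconn : (F x '' Ξ).OrdConnected) (hub : ¬ BddAbove (F x '' Ξ)) :
    (∑ i, F x (ξ i)) / n + ε * R =
      sSup {r : ℝ | ∃ Q : Measure ℝ, IsProbabilityMeasure Q ∧ Q ((F x '' Ξ)ᶜ) = 0 ∧
        Wcost (fun a b => |a - b|) Q ((empMeasure ξ).map (F x)) ≤ ENNReal.ofReal (ε * R) ∧
        r = ∫ s, s ∂Q} := by
  have hc : 0 ≤ ε * R := mul_nonneg hε.le hR
  have hn' : (n : ℝ) ≠ 0 := by positivity
  rw [map_empMeasure ξ hFmeas]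
  set y : Fin n → ℝ := fun i ↦ F x (ξ i) + ε * R
  have hy : ∀ i, y i ∈ F x '' Ξ := fun i ↦
    hconn.mem_of_le_of_not_bddAbove hub ⟨ξ i, hξ i, rfl⟩ (le_add_of_nonneg_right hc)
  symm
  refine IsGreatest.csSup_eq ⟨⟨empMeasure y, isProbabilityMeasure_empMeasure y hn,
    empMeasure_compl_eq_zero hy, ?_, ?_⟩, ?_⟩
  · refine (Wcost_empMeasure_le _ y _).trans_eq ?_
    simp [y, abs_of_nonneg hc, ENNReal.inv_mul_cancel_left, hn.ne']
  · rw [integral_empMeasure, Finset.sum_add_distrib]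
    simp [add_div, hn']
  · rintro _ ⟨Q, -, -, hW, rfl⟩
    calc ∫ s, s ∂Q ≤ ∫ s, s ∂empMeasure (F x ∘ ξ) + ε * R :=
          integral_le_integral_add_of_Wcost_le (integrable_empMeasure _ _) hc hW
      _ = _ := by rw [integral_empMeasure]; rfl
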